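/- Let M be a matroid, I an independent set, u ∈ cl(I) \ I, v ∈ C(u, I), and J := I + u - v. Let x ∈ (cl(I) \ I) - u and y ∈ I - v, and suppose that y ∉ C(u, I) or v ∉ C(x, I). Then y ∈ C(x, I) if and only if y ∈ C(x, J). -/

import Mathlib

/-- A circuit of a matroid is an inclusion-wise minimal dependent set. -/
def Matroid.IsCircuit' {α : Type*} (M : Matroid α) (C : Set α) : Prop :=
  M.Dep C ∧ ∀ ⦃D : Set α⦄, D ⊂ C → M.Indep D

/-- The fundamental-circuit property: `C` is the circuit of `M` contained in `I + u`
and containing `u`. -/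
def IsFundCircuit {α : Type*} (M : Matroid α) (I : Set α) (u : α) (C : Set α) : Prop :=
  M.IsCircuit' C ∧ u ∈ C ∧ C ⊆ insert u I

/-! With `J = I + u - v`, the circuit `C(x, J)` lies in `C(x, I) ∪ C(u, I)`, since `C(u, I)` lets
`J` span everything `I` spans. The exchange is symmetric: `I = J + v - u` and `C(v, J) = C(u, I)`,
so also `C(x, I) ⊆ C(x, J) ∪ C(u, I)`, and the two circuits agree off `C(u, I)`. If instead
`v ∉ C(x, I)`, then `C(x, I)` already lies in `J + x`, so it is `C(x, J)` by uniqueness. -/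

open Set

namespace Matroid

variable {α : Type*} {M : Matroid α} {I J K C : Set α} {u v x y : α}

lemma isCircuit'_iff : M.IsCircuit' C ↔ M.IsCircuit C :=
  isCircuit_iff_forall_ssubset.symm

lemma _root_.IsFundCircuit.eq_fundCircuit (hI : M.Indep I) (hC : IsFundCircuit M I u C) :
    C = M.fundCircuit u I :=
  (isCircuit'_iff.1 hC.1).eq_fundCircuit_of_subset hI hC.2.2

lemma fundCircuit_subset_insert_of_mem_closure (hKJ : K ⊆ J) (hx : x ∈ M.closure K) :
    M.fundCircuit x J ⊆ insert x K := by
  rw [fundCircuit_eq_sInter (M.closure_subset_closure hKJ hx)]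
  exact insert_subset_insert (sInter_subset_of_mem ⟨hKJ, hx⟩)

lemma Indep.insert_sdiff_indep_of_mem_fundCircuit (hI : M.Indep I) (hu : u ∈ M.closure I)
    (huI : u ∉ I) (hv : v ∈ M.fundCircuit u I) : M.Indep (insert u I \ {v}) :=
  (hI.mem_fundCircuit_iff hu huI).1 hv

lemma Indep.closure_insert_sdiff_of_mem_fundCircuit (hI : M.Indep I) (hu : u ∈ M.closure I)
    (huI : u ∉ I) (hv : v ∈ M.fundCircuit u I) :
    M.closure (insert u I \ {v}) = M.closure I := by
  have hvJ : v ∈ M.closure (insert u I \ {v}) :=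
    M.closure_subset_closure (sdiff_subset_sdiff_left (M.fundCircuit_subset_insert u I))
      ((hI.fundCircuit_isCircuit hu huI).mem_closure_sdiff_singleton_of_mem hv)
  refine (M.closure_subset_closure_of_subset_closure ?_).antisymm
    (M.closure_subset_closure_of_subset_closure ?_)
  · exact sdiff_subset.trans (insert_subset hu (M.subset_closure I))
  · rw [← M.closure_insert_eq_of_mem_closure hvJ, insert_sdiff_singleton]
    exact M.subset_closure_of_subset' ((subset_insert u I).trans (subset_insert v _))

lemma Indep.fundCircuit_insert_sdiff_eq (hI : M.Indep I) (hu : u ∈ M.closure I)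
    (huI : u ∉ I) (hv : v ∈ M.fundCircuit u I) :
    M.fundCircuit v (insert u I \ {v}) = M.fundCircuit u I := by
  refine ((hI.fundCircuit_isCircuit hu huI).eq_fundCircuit_of_subset
    (hI.insert_sdiff_indep_of_mem_fundCircuit hu huI hv) ?_).symm
  rw [insert_sdiff_singleton]
  exact (M.fundCircuit_subset_insert u I).trans (subset_insert v _)

/-- Off `x` and `v`, `C(x, I) ∪ C(u, I)` lies in `I + u - v` and still spans `x`: `C(u, I)` spans
`v`, and then `C(x, I)` spans `x`. -/
lemma Indep.fundCircuit_insert_sdiff_subset (hI : M.Indep I) (hu : u ∈ M.closure I)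
    (huI : u ∉ I) (hv : v ∈ M.fundCircuit u I) (hx : x ∈ M.closure I) (hxI : x ∉ I)
    (hxu : x ≠ u) :
    M.fundCircuit x (insert u I \ {v}) ⊆ M.fundCircuit x I ∪ M.fundCircuit u I := by
  set Cx := M.fundCircuit x I
  set Cu := M.fundCircuit u I
  have hCxI : Cx ⊆ insert x I := M.fundCircuit_subset_insert x I
  have hCuI : Cu ⊆ insert u I := M.fundCircuit_subset_insert u I
  set K := (Cx ∪ Cu) \ {x, v}
  have hKJ : K ⊆ insert u I \ {v} := by
    intro e ⟨he, hexv⟩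
    simp only [mem_insert_iff, mem_singleton_iff, not_or] at hexv
    refine ⟨?_, hexv.2⟩
    rcases he with he | he
    · exact mem_insert_of_mem _ ((hCxI he).resolve_left hexv.1)
    · exact hCuI he
  have hvK : v ∈ M.closure K := by
    refine M.closure_subset_closure ?_
      ((hI.fundCircuit_isCircuit hu huI).mem_closure_sdiff_singleton_of_mem hv)
    rintro e ⟨he, hev⟩
    refine ⟨Or.inr he, ?_⟩
    rintro (rfl | rfl)
    · exact (hCuI he).elim hxu hxI
    · exact hev rfl
  have hxK : x ∈ M.closure K := by
    rw [← M.closure_insert_eq_of_mem_closure hvK]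
    refine M.closure_subset_closure ?_
      ((hI.fundCircuit_isCircuit hx hxI).mem_closure_sdiff_singleton_of_mem
        (M.mem_fundCircuit x I))
    rintro e ⟨he, hex⟩
    by_cases hev : e = v
    · exact hev ▸ mem_insert v K
    · exact mem_insert_of_mem _ ⟨Or.inl he, by simp_all⟩
  exact (fundCircuit_subset_insert_of_mem_closure hKJ hxK).trans
    (insert_subset (Or.inl (M.mem_fundCircuit x I)) sdiff_subset)

lemma Indep.mem_fundCircuit_insert_sdiff_iff (hI : M.Indep I) (hu : u ∈ M.closure I)
    (huI : u ∉ I) (hv : v ∈ M.fundCircuit u I) (hx : x ∈ M.closure I) (hxI : x ∉ I)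
    (hxu : x ≠ u)
    (h : y ∉ M.fundCircuit u I ∨ v ∉ M.fundCircuit x I) :
    y ∈ M.fundCircuit x I ↔ y ∈ M.fundCircuit x (insert u I \ {v}) := by
  set J := insert u I \ {v}
  have hJ : M.Indep J := hI.insert_sdiff_indep_of_mem_fundCircuit hu huI hv
  have hvuI : v ∈ insert u I := M.fundCircuit_subset_insert u I hv
  have hxuI : x ∉ insert u I := by simp [hxu, hxI]
  rcases h with hyu | hvx
  · have hclJ : M.closure J = M.closure I :=
      hI.closure_insert_sdiff_of_mem_fundCircuit hu huI hv
    have hCvJ : M.fundCircuit v J = M.fundCircuit u I := hI.fundCircuit_insert_sdiff_eq hu huI hv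
    have hswap : insert v J \ {u} = I := by
      rw [insert_sdiff_singleton, insert_eq_of_mem hvuI, insert_sdiff_self_of_notMem huI]
    have hforth := hI.fundCircuit_insert_sdiff_subset hu huI hv hx hxI hxu
    have hback := hJ.fundCircuit_insert_sdiff_subset
      (hclJ ▸ insert_subset hu (M.subset_closure I) hvuI) (fun h ↦ h.2 rfl)
      (hCvJ ▸ M.mem_fundCircuit u I) (hclJ ▸ hx) (fun h ↦ hxuI h.1)
      (fun h ↦ hxuI (h ▸ hvuI))
    rw [hswap, hCvJ] at hback
    exact ⟨fun h ↦ (hback h).resolve_right hyu, fun h ↦ (hforth h).resolve_right hyu⟩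
  · suffices hCx : M.fundCircuit x I ⊆ insert x J by
      rw [(hI.fundCircuit_isCircuit hx hxI).eq_fundCircuit_of_subset hJ hCx]
    intro e he
    rcases M.fundCircuit_subset_insert x I he with rfl | heI
    · exact mem_insert e J
    · exact mem_insert_of_mem _ ⟨mem_insert_of_mem _ heI, by rintro rfl; exact hvx he⟩

end Matroid

theorem iri_tomizawa_iii_iv_general {α : Type*} (M : Matroid α) (I : Set α) (hI : M.Indep I)
    (u : α) (hu : u ∈ M.closure I \ I) (Cu : Set α) (hCu : IsFundCircuit M I u Cu)
    (v : α) (hv : v ∈ Cu) (x : α) (hx : x ∈ M.closure I \ I) (hxu : x ≠ u)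
    (y : α)
    (Cx : Set α) (hCx : IsFundCircuit M I x Cx)
    (CxJ : Set α) (hCxJ : IsFundCircuit M (insert u I \ {v}) x CxJ)
    (hside : y ∉ Cu ∨ v ∉ Cx) :
    y ∈ Cx ↔ y ∈ CxJ := by
  obtain rfl := hCu.eq_fundCircuit hI
  obtain rfl := hCx.eq_fundCircuit hI
  obtain rfl := hCxJ.eq_fundCircuit (hI.insert_sdiff_indep_of_mem_fundCircuit hu.1 hu.2 hv)
  exact hI.mem_fundCircuit_insert_sdiff_iff hu.1 hu.2 hv hx.1 hx.2 hxu hside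

/-- Lemma (Iri–Tomizawa, parts (iii) and (iv)): with `J = I + u - v` where
`v ∈ C(u, I)`, for `x ∈ (cl(I) \ I) - u` and `y ∈ I - v`, if `y ∉ C(u, I)` or
`v ∉ C(x, I)`, then `y ∈ C(x, I) ↔ y ∈ C(x, J)`. -/
theorem iri_tomizawa_iii_iv {α : Type*} (M : Matroid α) (I : Set α) (hI : M.Indep I)
    (u : α) (hu : u ∈ M.closure I \ I) (Cu : Set α) (hCu : IsFundCircuit M I u Cu)
    (v : α) (hv : v ∈ Cu) (x : α) (hx : x ∈ M.closure I \ I) (hxu : x ≠ u)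
    (y : α) (hy : y ∈ I) (hyv : y ≠ v)
    (Cx : Set α) (hCx : IsFundCircuit M I x Cx)
    (CxJ : Set α) (hCxJ : IsFundCircuit M (insert u I \ {v}) x CxJ)
    (hside : y ∉ Cu ∨ v ∉ Cx) :
    y ∈ Cx ↔ y ∈ CxJ :=
  iri_tomizawa_iii_iv_general M I hI u hu Cu hCu v hv x hx hxu y Cx hCx CxJ hCxJ hside
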